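/- Let ν be a translation invariant Gibbs state of the wetting SOS model at parameters (β,h) with ν[φ(x)] < ∞, which stochastically dominates P̃ := lim_Λ P^{h,0}_{Λ,β}, and suppose both measures have the same contact fraction ν(φ(x)=0) = P̃(φ(x)=0) for all x. Then for each x, the conditional probability identity E_ν[ G((φ(y))_{y∼x}) ] = E_{P̃}[ G((φ(y))_{y∼x}) ] where G(ψ) = e^{h−βΣ_y ψ(y)}/(e^{h−βΣ_y ψ(y)} + Σ_{k≥1} e^{−βΣ_y |ψ(y)−k|}) is strictly decreasing in each coordinate, together with stochastic domination, implies (φ(y))_{y∼x} has the same law under ν and P̃, and hence ν = P̃. -/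

import Mathlib

open MeasureTheory

abbrev V : Type := ℤ × ℤ

/-- Configurations of the wetting SOS model: nonnegative heights on `ℤ²`. -/
abbrev Conf : Type := V → ℕ

def nbrs (x : V) : Finset V :=
  {(x.1 + 1, x.2), (x.1 - 1, x.2), (x.1, x.2 + 1), (x.1, x.2 - 1)}

/-- `G(ψ)` : the conditional probability that `φ(x) = 0` given the neighbouring heights,
`G(ψ) = e^{h−βΣψ(y)}/(e^{h−βΣψ(y)} + Σ_{k≥1} e^{−βΣ_y|ψ(y)−k|})`. -/
noncomputable def Gfun (β h : ℝ) (x : V) (φ : Conf) : ℝ :=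
  Real.exp (h - β * ∑ y ∈ nbrs x, (φ y : ℝ)) /
    (Real.exp (h - β * ∑ y ∈ nbrs x, (φ y : ℝ))
      + ∑' k : ℕ, Real.exp (-β * ∑ y ∈ nbrs x, |(φ y : ℝ) - ((k : ℝ) + 1)|))

/-- Translation of configurations. -/
def shift (t : V) (φ : Conf) : Conf := fun x => φ (x + t)


namespace GibbsAux

noncomputable def Sf (x : V) (φ : Conf) : ℝ := ∑ y ∈ nbrs x, (φ y : ℝ)

noncomputable def Nf (β h : ℝ) (x : V) (φ : Conf) : ℝ := Real.exp (h - β * Sf x φ)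

noncomputable def Dt (β : ℝ) (x : V) (φ : Conf) (k : ℕ) : ℝ :=
  Real.exp (-β * ∑ y ∈ nbrs x, |(φ y : ℝ) - ((k : ℝ) + 1)|)

noncomputable def Ds (β : ℝ) (x : V) (φ : Conf) : ℝ := ∑' k : ℕ, Dt β x φ k

lemma Gfun_eq (β h : ℝ) (x : V) (φ : Conf) :
    Gfun β h x φ = Nf β h x φ / (Nf β h x φ + Ds β x φ) := rfl

lemma Nf_pos (β h : ℝ) (x : V) (φ : Conf) : 0 < Nf β h x φ := Real.exp_pos _

lemma Dt_pos (β : ℝ) (x : V) (φ : Conf) (k : ℕ) : 0 < Dt β x φ k := Real.exp_pos _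

lemma card_pos (x : V) : 0 < ((nbrs x).card : ℝ) := by
  have : (x.1 + 1, x.2) ∈ nbrs x := by simp [nbrs]
  exact_mod_cast Finset.card_pos.2 ⟨_, this⟩

lemma Dt_le (β : ℝ) (hβ : 0 < β) (x : V) (φ : Conf) (k : ℕ) :
    Dt β x φ k ≤ Real.exp (β * Sf x φ) * Real.exp (-(((nbrs x).card : ℝ) * β)) ^ (k + 1) := by
  have h1 : ∑ y ∈ nbrs x, (((k : ℝ) + 1) - (φ y : ℝ)) ≤
      ∑ y ∈ nbrs x, |(φ y : ℝ) - ((k : ℝ) + 1)| := by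
    refine Finset.sum_le_sum fun y _ => ?_
    rw [abs_sub_comm]; exact le_abs_self _
  have h2 : ∑ y ∈ nbrs x, (((k : ℝ) + 1) - (φ y : ℝ)) =
      ((nbrs x).card : ℝ) * ((k : ℝ) + 1) - Sf x φ := by
    rw [Finset.sum_sub_distrib, Finset.sum_const, nsmul_eq_mul]; rfl
  have key : Dt β x φ k ≤ Real.exp (β * Sf x φ - ((nbrs x).card : ℝ) * β * ((k : ℝ) + 1)) := by
    rw [Dt, Real.exp_le_exp]
    nlinarith [h1, h2]
  calc Dt β x φ k ≤ _ := key
    _ = Real.exp (β * Sf x φ) * Real.exp (-(((nbrs x).card : ℝ) * β)) ^ (k + 1) := by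
        rw [← Real.exp_nat_mul, ← Real.exp_add]
        push_cast
        ring_nf

lemma summable_Dt (β : ℝ) (hβ : 0 < β) (x : V) (φ : Conf) : Summable (Dt β x φ) := by
  have hr0 : (0:ℝ) ≤ Real.exp (-(((nbrs x).card : ℝ) * β)) := (Real.exp_pos _).le
  have hr1 : Real.exp (-(((nbrs x).card : ℝ) * β)) < 1 := by
    rw [Real.exp_lt_one_iff]
    have := card_pos x
    nlinarith
  have hg : Summable (fun k : ℕ =>
      Real.exp (β * Sf x φ) * Real.exp (-(((nbrs x).card : ℝ) * β)) ^ (k + 1)) := by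
    have := (summable_geometric_of_lt_one hr0 hr1).mul_left
      (Real.exp (β * Sf x φ) * Real.exp (-(((nbrs x).card : ℝ) * β)))
    refine this.congr fun k => ?_
    ring
  exact Summable.of_nonneg_of_le (fun k => (Dt_pos β x φ k).le) (fun k => Dt_le β hβ x φ k) hg

lemma Ds_pos (β : ℝ) (hβ : 0 < β) (x : V) (φ : Conf) : 0 < Ds β x φ := by
  have := summable_Dt β hβ x φ
  exact Summable.tsum_pos this (fun k => (Dt_pos β x φ k).le) 0 (Dt_pos β x φ 0)

lemma Ds_nonneg (β : ℝ) (x : V) (φ : Conf) : 0 ≤ Ds β x φ := by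
  apply tsum_nonneg; exact fun k => (Dt_pos β x φ k).le

lemma denom_pos (β h : ℝ) (x : V) (φ : Conf) : 0 < Nf β h x φ + Ds β x φ :=
  lt_add_of_pos_of_le (Nf_pos β h x φ) (Ds_nonneg β x φ)

lemma G_pos (β h : ℝ) (x : V) (φ : Conf) : 0 < Gfun β h x φ :=
  div_pos (Nf_pos β h x φ) (denom_pos β h x φ)

lemma G_le_one (β h : ℝ) (x : V) (φ : Conf) : Gfun β h x φ ≤ 1 := by
  rw [Gfun_eq]
  rw [div_le_one (denom_pos β h x φ)]
  exact le_add_of_nonneg_right (Ds_nonneg β x φ)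

lemma abs_G_le_one (β h : ℝ) (x : V) (φ : Conf) : |Gfun β h x φ| ≤ 1 := by
  rw [abs_of_pos (G_pos β h x φ)]; exact G_le_one β h x φ

lemma aux_f_mono {u₁ u₂ m : ℝ} (hu : u₁ ≤ u₂) : u₁ - |u₁ - m| ≤ u₂ - |u₂ - m| := by
  have h1 : |u₂ - m| - |u₁ - m| ≤ |u₂ - u₁| := by
    have := abs_sub_abs_le_abs_sub (u₂ - m) (u₁ - m)
    simpa using this
  rw [abs_of_nonneg (sub_nonneg.2 hu)] at h1
  linarith

lemma aux_f_strict {u₁ u₂ m : ℝ} (hu : u₁ < u₂) (hm : u₂ ≤ m) :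
    u₁ - |u₁ - m| < u₂ - |u₂ - m| := by
  rw [abs_of_nonpos (by linarith : u₁ - m ≤ 0), abs_of_nonpos (by linarith : u₂ - m ≤ 0)]
  linarith

lemma cross_le {β h : ℝ} (hβ : 0 < β) {x : V} {φ₁ φ₂ : Conf}
    (h12 : ∀ y ∈ nbrs x, φ₁ y ≤ φ₂ y) (k : ℕ) :
    Nf β h x φ₂ * Dt β x φ₁ k ≤ Nf β h x φ₁ * Dt β x φ₂ k := by
  rw [Nf, Nf, Dt, Dt, ← Real.exp_add, ← Real.exp_add, Real.exp_le_exp]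
  have hsum : ∑ y ∈ nbrs x, ((φ₁ y : ℝ) - |(φ₁ y : ℝ) - ((k:ℝ)+1)|) ≤
      ∑ y ∈ nbrs x, ((φ₂ y : ℝ) - |(φ₂ y : ℝ) - ((k:ℝ)+1)|) := by
    refine Finset.sum_le_sum fun y hy => ?_
    exact aux_f_mono (by exact_mod_cast h12 y hy)
  rw [Finset.sum_sub_distrib, Finset.sum_sub_distrib] at hsum
  have := mul_le_mul_of_nonneg_left hsum hβ.le
  simp only [Sf, mul_sub] at *
  linarith

lemma cross_lt {β h : ℝ} (hβ : 0 < β) {x : V} {φ₁ φ₂ : Conf}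
    (h12 : ∀ y ∈ nbrs x, φ₁ y ≤ φ₂ y) {y₀ : V} (hy₀ : y₀ ∈ nbrs x)
    (hlt : φ₁ y₀ < φ₂ y₀) :
    Nf β h x φ₂ * Dt β x φ₁ (φ₂ y₀) < Nf β h x φ₁ * Dt β x φ₂ (φ₂ y₀) := by
  set k : ℕ := φ₂ y₀ with hk
  rw [Nf, Nf, Dt, Dt, ← Real.exp_add, ← Real.exp_add, Real.exp_lt_exp]
  have hsum : ∑ y ∈ nbrs x, ((φ₁ y : ℝ) - |(φ₁ y : ℝ) - ((k:ℝ)+1)|) <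
      ∑ y ∈ nbrs x, ((φ₂ y : ℝ) - |(φ₂ y : ℝ) - ((k:ℝ)+1)|) := by
    refine Finset.sum_lt_sum (fun y hy => aux_f_mono (by exact_mod_cast h12 y hy)) ?_
    refine ⟨y₀, hy₀, aux_f_strict (by exact_mod_cast hlt) ?_⟩
    rw [hk]; push_cast; linarith
  rw [Finset.sum_sub_distrib, Finset.sum_sub_distrib] at hsum
  have := mul_lt_mul_of_pos_left hsum hβ
  simp only [Sf, mul_sub] at *
  linarith

lemma crossD_le {β h : ℝ} (hβ : 0 < β) {x : V} {φ₁ φ₂ : Conf}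
    (h12 : ∀ y ∈ nbrs x, φ₁ y ≤ φ₂ y) :
    Nf β h x φ₂ * Ds β x φ₁ ≤ Nf β h x φ₁ * Ds β x φ₂ := by
  rw [Ds, Ds, ← tsum_mul_left, ← tsum_mul_left]
  exact Summable.tsum_le_tsum (fun k => cross_le hβ h12 k)
    ((summable_Dt β hβ x φ₁).mul_left _) ((summable_Dt β hβ x φ₂).mul_left _)

lemma crossD_lt {β h : ℝ} (hβ : 0 < β) {x : V} {φ₁ φ₂ : Conf}
    (h12 : ∀ y ∈ nbrs x, φ₁ y ≤ φ₂ y) {y₀ : V} (hy₀ : y₀ ∈ nbrs x)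
    (hlt : φ₁ y₀ < φ₂ y₀) :
    Nf β h x φ₂ * Ds β x φ₁ < Nf β h x φ₁ * Ds β x φ₂ := by
  rw [Ds, Ds, ← tsum_mul_left, ← tsum_mul_left]
  exact Summable.tsum_lt_tsum (fun k => cross_le hβ h12 k) (cross_lt hβ h12 hy₀ hlt)
    ((summable_Dt β hβ x φ₁).mul_left _) ((summable_Dt β hβ x φ₂).mul_left _)

lemma G_le {β h : ℝ} (hβ : 0 < β) {x : V} {φ₁ φ₂ : Conf}
    (h12 : ∀ y ∈ nbrs x, φ₁ y ≤ φ₂ y) :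
    Gfun β h x φ₂ ≤ Gfun β h x φ₁ := by
  rw [Gfun_eq, Gfun_eq, div_le_div_iff₀ (denom_pos β h x φ₂) (denom_pos β h x φ₁)]
  have := crossD_le (h := h) hβ h12
  nlinarith [this]

lemma G_lt {β h : ℝ} (hβ : 0 < β) {x : V} {φ₁ φ₂ : Conf}
    (h12 : ∀ y ∈ nbrs x, φ₁ y ≤ φ₂ y) {y₀ : V} (hy₀ : y₀ ∈ nbrs x)
    (hlt : φ₁ y₀ < φ₂ y₀) :
    Gfun β h x φ₂ < Gfun β h x φ₁ := by
  rw [Gfun_eq, Gfun_eq, div_lt_div_iff₀ (denom_pos β h x φ₂) (denom_pos β h x φ₁)]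
  have := crossD_lt (h := h) hβ h12 hy₀ hlt
  nlinarith [this]

lemma G_congr {β h : ℝ} {x : V} {φ₁ φ₂ : Conf}
    (h12 : ∀ y ∈ nbrs x, φ₁ y = φ₂ y) :
    Gfun β h x φ₁ = Gfun β h x φ₂ := by
  have hS : ∑ y ∈ nbrs x, (φ₁ y : ℝ) = ∑ y ∈ nbrs x, (φ₂ y : ℝ) :=
    Finset.sum_congr rfl fun y hy => by rw [h12 y hy]
  have hD : ∀ k : ℕ, (∑ y ∈ nbrs x, |(φ₁ y : ℝ) - ((k : ℝ) + 1)|) =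
      ∑ y ∈ nbrs x, |(φ₂ y : ℝ) - ((k : ℝ) + 1)| := fun k =>
    Finset.sum_congr rfl fun y hy => by rw [h12 y hy]
  unfold Gfun
  rw [hS]
  congr 2
  exact tsum_congr fun k => by rw [hD k]

/-- restriction of a configuration to the neighbourhood of `x`. -/
def restr (x : V) (φ : Conf) (z : { y // y ∈ nbrs x }) : ℕ := φ z.val

lemma measurable_restr (x : V) : Measurable (restr x) :=
  measurable_pi_lambda _ fun z => measurable_pi_apply z.val

/-- extend a neighbourhood pattern by zero. -/
noncomputable def ext0 (x : V) (a : { y // y ∈ nbrs x } → ℕ) : Conf :=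
  fun y => if hy : y ∈ nbrs x then a ⟨y, hy⟩ else 0

lemma restr_ext0 (x : V) (a : { y // y ∈ nbrs x } → ℕ) {y : V} (hy : y ∈ nbrs x) :
    ext0 x a y = a ⟨y, hy⟩ := by simp [ext0, hy]

lemma G_factor (β h : ℝ) (x : V) (φ : Conf) :
    Gfun β h x φ = Gfun β h x (ext0 x (restr x φ)) := by
  refine G_congr fun y hy => ?_
  rw [restr_ext0 x _ hy]; rfl

lemma G_measurable (β h : ℝ) (x : V) : Measurable (Gfun β h x) := by
  have : Gfun β h x = (fun a => Gfun β h x (ext0 x a)) ∘ restr x := by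
    funext φ; exact G_factor β h x φ
  rw [this]
  exact (measurable_of_countable _).comp (measurable_restr x)

end GibbsAux

namespace GibbsAux

open Filter

/-- upward-closed sets of configurations. -/
def IsUpper (S : Set Conf) : Prop := ∀ ⦃φ ψ : Conf⦄, φ ≤ ψ → φ ∈ S → ψ ∈ S

variable {ν μ : Measure Conf}

lemma integrable_of_bdd [IsProbabilityMeasure ν] {f : Conf → ℝ} (hf : Measurable f)
    {C : ℝ} (hC : ∀ φ, |f φ| ≤ C) : Integrable f ν := by
  refine (integrable_const C).mono' hf.aestronglyMeasurable ?_
  exact ae_of_all _ fun φ => by simpa [Real.norm_eq_abs] using hC φ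

section Dom

variable [IsProbabilityMeasure ν] [IsProbabilityMeasure μ]
variable (hdom : ∀ f : Conf → ℝ, Monotone f → Measurable f →
    (∃ Cb : ℝ, ∀ φ, |f φ| ≤ Cb) → ∫ φ, f φ ∂μ ≤ ∫ φ, f φ ∂ν)

include hdom

lemma meas_upper {S : Set Conf} (hSu : IsUpper S) (hSm : MeasurableSet S) :
    μ S ≤ ν S := by
  have hmono : Monotone (S.indicator (fun _ => (1:ℝ))) := by
    intro a b hab
    by_cases ha : a ∈ S
    · rw [Set.indicator_of_mem ha, Set.indicator_of_mem (hSu hab ha)]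
    · rw [Set.indicator_of_notMem ha]
      exact Set.indicator_nonneg (fun _ _ => zero_le_one) b
  have hmeas : Measurable (S.indicator (fun _ => (1:ℝ))) := measurable_const.indicator hSm
  have hbd : ∃ Cb : ℝ, ∀ φ, |S.indicator (fun _ => (1:ℝ)) φ| ≤ Cb := by
    refine ⟨1, fun φ => ?_⟩
    by_cases hφ : φ ∈ S <;> simp [Set.indicator_apply, hφ]
  have := hdom _ hmono hmeas hbd
  rw [show (S.indicator (fun _ => (1:ℝ))) = S.indicator 1 from rfl] at this
  rw [integral_indicator_one hSm, integral_indicator_one hSm] at this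
  exact (ENNReal.toReal_le_toReal (measure_ne_top _ _) (measure_ne_top _ _)).1 this

lemma meas_lower {S : Set Conf} (hSl : ∀ ⦃φ ψ : Conf⦄, φ ≤ ψ → ψ ∈ S → φ ∈ S)
    (hSm : MeasurableSet S) : ν S ≤ μ S := by
  have hupper : IsUpper Sᶜ := fun φ ψ hle hφ hψ => hφ (hSl hle hψ)
  have h1 : μ Sᶜ ≤ ν Sᶜ := meas_upper hdom hupper hSm.compl
  have hν : (ν S).toReal + (ν Sᶜ).toReal = 1 := by
    rw [← ENNReal.toReal_add (measure_ne_top _ _) (measure_ne_top _ _),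
      prob_add_prob_compl hSm]
    rfl
  have hμ : (μ S).toReal + (μ Sᶜ).toReal = 1 := by
    rw [← ENNReal.toReal_add (measure_ne_top _ _) (measure_ne_top _ _),
      prob_add_prob_compl hSm]
    rfl
  have h1' := (ENNReal.toReal_le_toReal (measure_ne_top _ _) (measure_ne_top _ _)).2 h1
  refine (ENNReal.toReal_le_toReal (measure_ne_top _ _) (measure_ne_top _ _)).1 ?_
  linarith

lemma inter_eq {A B : Set Conf} (hAu : IsUpper A) (hBu : IsUpper B)
    (hAm : MeasurableSet A) (hBm : MeasurableSet B)
    (hA : ν A = μ A) (hB : ν B = μ B) : ν (A ∩ B) = μ (A ∩ B) := by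
  have hiu : IsUpper (A ∩ B) := fun φ ψ hle hφ => ⟨hAu hle hφ.1, hBu hle hφ.2⟩
  have huu : IsUpper (A ∪ B) := fun φ ψ hle hφ =>
    hφ.elim (fun hφ => Or.inl (hAu hle hφ)) (fun hφ => Or.inr (hBu hle hφ))
  have h1 : μ (A ∩ B) ≤ ν (A ∩ B) := meas_upper hdom hiu (hAm.inter hBm)
  have h2 : μ (A ∪ B) ≤ ν (A ∪ B) := meas_upper hdom huu (hAm.union hBm)
  have hν : ν (A ∪ B) + ν (A ∩ B) = ν A + ν B := measure_union_add_inter A hBm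
  have hμ : μ (A ∪ B) + μ (A ∩ B) = μ A + μ B := measure_union_add_inter A hBm
  have e1 : (ν (A∪B)).toReal + (ν (A∩B)).toReal = (ν A).toReal + (ν B).toReal := by
    rw [← ENNReal.toReal_add (measure_ne_top _ _) (measure_ne_top _ _),
      ← ENNReal.toReal_add (measure_ne_top _ _) (measure_ne_top _ _), hν]
  have e2 : (μ (A∪B)).toReal + (μ (A∩B)).toReal = (μ A).toReal + (μ B).toReal := by
    rw [← ENNReal.toReal_add (measure_ne_top _ _) (measure_ne_top _ _),
      ← ENNReal.toReal_add (measure_ne_top _ _) (measure_ne_top _ _), hμ]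
  have h1' := (ENNReal.toReal_le_toReal (measure_ne_top _ _) (measure_ne_top _ _)).2 h1
  have h2' := (ENNReal.toReal_le_toReal (measure_ne_top _ _) (measure_ne_top _ _)).2 h2
  have hA' : (ν A).toReal = (μ A).toReal := by rw [hA]
  have hB' : (ν B).toReal = (μ B).toReal := by rw [hB]
  refine ((ENNReal.toReal_eq_toReal_iff' (measure_ne_top _ _) (measure_ne_top _ _)).1 ?_)
  linarith

end Dom

end GibbsAux

namespace GibbsAux

open Filter Topology

lemma clamp_diff (a ε : ℝ) (hε : 0 ≤ ε) :
    0 ≤ max a 0 - max (a - ε) 0 ∧ max a 0 - max (a - ε) 0 ≤ ε := by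
  rcases le_total a 0 with ha | ha
  · rw [max_eq_right ha, max_eq_right (by linarith)]
    constructor <;> linarith
  · rcases le_total (a - ε) 0 with h2 | h2
    · rw [max_eq_left ha, max_eq_right h2]
      constructor <;> linarith
    · rw [max_eq_left ha, max_eq_left h2]
      constructor <;> linarith

section Level

variable {β h : ℝ} (hβ : 0 < β) (x : V)
variable {ν μ : Measure Conf} [IsProbabilityMeasure ν] [IsProbabilityMeasure μ]
variable (hdom : ∀ f : Conf → ℝ, Monotone f → Measurable f →
    (∃ Cb : ℝ, ∀ φ, |f φ| ≤ Cb) → ∫ φ, f φ ∂μ ≤ ∫ φ, f φ ∂ν)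

include hβ hdom

lemma clamp_eq (hG : ∫ φ, Gfun β h x φ ∂ν = ∫ φ, Gfun β h x φ ∂μ) (t : ℝ) :
    ∫ φ, max (Gfun β h x φ - t) 0 ∂ν = ∫ φ, max (Gfun β h x φ - t) 0 ∂μ := by
  have Gm : Measurable (Gfun β h x) := G_measurable β h x
  have Gb : ∀ φ, |Gfun β h x φ| ≤ 1 := abs_G_le_one β h x
  have g1m : Measurable fun φ => max (Gfun β h x φ - t) 0 :=
    (Gm.sub measurable_const).max measurable_const
  have g2m : Measurable fun φ => max (t - Gfun β h x φ) 0 :=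
    (measurable_const.sub Gm).max measurable_const
  have g1b : ∀ φ, |max (Gfun β h x φ - t) 0| ≤ 1 + |t| := by
    intro φ
    rw [abs_of_nonneg (le_max_right _ _)]
    rcases le_total (Gfun β h x φ - t) 0 with h2 | h2
    · rw [max_eq_right h2]; positivity
    · rw [max_eq_left h2]
      have := abs_le.1 (Gb φ)
      have := neg_abs_le t
      linarith
  have g2b : ∀ φ, |max (t - Gfun β h x φ) 0| ≤ 1 + |t| := by
    intro φ
    rw [abs_of_nonneg (le_max_right _ _)]
    rcases le_total (t - Gfun β h x φ) 0 with h2 | h2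
    · rw [max_eq_right h2]; positivity
    · rw [max_eq_left h2]
      have := abs_le.1 (Gb φ)
      have := le_abs_self t
      linarith
  have Ganti : ∀ ⦃φ ψ : Conf⦄, φ ≤ ψ → Gfun β h x ψ ≤ Gfun β h x φ :=
    fun φ ψ hle => G_le hβ fun y _ => hle y
  have mono1 : Monotone fun φ => -(max (Gfun β h x φ - t) 0) := by
    intro a b hab
    have : max (Gfun β h x b - t) 0 ≤ max (Gfun β h x a - t) 0 :=
      max_le_max (sub_le_sub_right (Ganti hab) t) le_rfl
    simpa using this
  have mono2 : Monotone fun φ => max (t - Gfun β h x φ) 0 := by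
    intro a b hab
    exact max_le_max (sub_le_sub_left (Ganti hab) t) le_rfl
  have hI1 : ∫ φ, max (Gfun β h x φ - t) 0 ∂ν ≤ ∫ φ, max (Gfun β h x φ - t) 0 ∂μ := by
    have := hdom _ mono1 g1m.neg ⟨1 + |t|, fun φ => by rw [abs_neg]; exact g1b φ⟩
    rw [integral_neg, integral_neg] at this
    linarith
  have hI2 : ∫ φ, max (t - Gfun β h x φ) 0 ∂μ ≤ ∫ φ, max (t - Gfun β h x φ) 0 ∂ν :=
    hdom _ mono2 g2m ⟨1 + |t|, g2b⟩
  have hid : ∀ φ : Conf, max (t - Gfun β h x φ) 0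
      = max (Gfun β h x φ - t) 0 + (t - Gfun β h x φ) := by
    intro φ
    rcases le_total (Gfun β h x φ) t with h2 | h2
    · rw [max_eq_left (by linarith), max_eq_right (by linarith)]; ring
    · rw [max_eq_right (by linarith), max_eq_left (by linarith)]; ring
  have key : ∀ (ρ : Measure Conf) [IsProbabilityMeasure ρ],
      ∫ φ, max (t - Gfun β h x φ) 0 ∂ρ
        = ∫ φ, max (Gfun β h x φ - t) 0 ∂ρ + (t - ∫ φ, Gfun β h x φ ∂ρ) := by
    intro ρ hρ
    have i1 : Integrable (fun φ => max (Gfun β h x φ - t) 0) ρ := integrable_of_bdd g1m g1b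
    have iG : Integrable (Gfun β h x) ρ := integrable_of_bdd Gm Gb
    have i3 : Integrable (fun φ => t - Gfun β h x φ) ρ := (integrable_const t).sub iG
    calc ∫ φ, max (t - Gfun β h x φ) 0 ∂ρ
        = ∫ φ, (max (Gfun β h x φ - t) 0 + (t - Gfun β h x φ)) ∂ρ := by
          exact integral_congr_ae (Filter.EventuallyEq.of_eq (funext hid))
      _ = ∫ φ, max (Gfun β h x φ - t) 0 ∂ρ + ∫ φ, (t - Gfun β h x φ) ∂ρ :=
          integral_add i1 i3
      _ = ∫ φ, max (Gfun β h x φ - t) 0 ∂ρ + (t - ∫ φ, Gfun β h x φ ∂ρ) := by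
          rw [integral_sub (integrable_const t) iG, integral_const]
          simp
  have eν := key ν
  have eμ := key μ
  rw [eν, eμ, hG] at hI2
  linarith

lemma level_eq (hG : ∫ φ, Gfun β h x φ ∂ν = ∫ φ, Gfun β h x φ ∂μ) (s : ℝ) :
    ν {φ : Conf | s < Gfun β h x φ} = μ {φ : Conf | s < Gfun β h x φ} := by
  have Gm : Measurable (Gfun β h x) := G_measurable β h x
  set S : Set Conf := {φ : Conf | s < Gfun β h x φ} with hSdef
  have hSm : MeasurableSet S := measurableSet_lt measurable_const Gm
  set F : ℕ → Conf → ℝ := fun n φ =>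
    ((n : ℝ) + 1) * (max (Gfun β h x φ - s) 0 - max (Gfun β h x φ - (s + 1/((n:ℝ)+1))) 0)
    with hFdef
  have Fm : ∀ n, Measurable (F n) := by
    intro n
    exact measurable_const.mul (((Gm.sub measurable_const).max measurable_const).sub
      (((Gm.sub measurable_const).max measurable_const)))
  have hFeq : ∀ n, ∫ φ, F n φ ∂ν = ∫ φ, F n φ ∂μ := by
    intro n
    have i1 : ∀ (ρ : Measure Conf) [IsProbabilityMeasure ρ] (t : ℝ),
        Integrable (fun φ => max (Gfun β h x φ - t) 0) ρ := by
      intro ρ hρ t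
      refine integrable_of_bdd ((Gm.sub measurable_const).max measurable_const) (C := 1 + |t|) ?_
      intro φ
      rw [abs_of_nonneg (le_max_right _ _)]
      rcases le_total (Gfun β h x φ - t) 0 with h2 | h2
      · rw [max_eq_right h2]; positivity
      · rw [max_eq_left h2]
        have := abs_le.1 (abs_G_le_one β h x φ)
        have := neg_abs_le t
        linarith
    simp only [hFdef]
    rw [integral_const_mul, integral_const_mul,
      integral_sub (i1 ν _) (i1 ν _), integral_sub (i1 μ _) (i1 μ _),
      clamp_eq hβ x hdom hG s, clamp_eq hβ x hdom hG (s + 1/((n:ℝ)+1))]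
  have hbound : ∀ n, ∀ φ, ‖F n φ‖ ≤ (1:ℝ) := by
    intro n φ
    have hεpos : (0:ℝ) < 1/((n:ℝ)+1) := by positivity
    obtain ⟨h0, h1⟩ := clamp_diff (Gfun β h x φ - s) (1/((n:ℝ)+1)) hεpos.le
    rw [sub_sub] at h0 h1
    have hnn : 0 ≤ F n φ := by
      simp only [hFdef]
      have : (0:ℝ) ≤ (n:ℝ) + 1 := by positivity
      nlinarith
    rw [Real.norm_eq_abs, abs_of_nonneg hnn]
    simp only [hFdef]
    calc ((n : ℝ) + 1) * (max (Gfun β h x φ - s) 0 - max (Gfun β h x φ - (s + 1/((n:ℝ)+1))) 0)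
        ≤ ((n : ℝ) + 1) * (1/((n:ℝ)+1)) := by
          apply mul_le_mul_of_nonneg_left h1 (by positivity)
      _ = 1 := by field_simp
  have hlim : ∀ φ, Tendsto (fun n => F n φ) atTop (𝓝 (S.indicator (fun _ => (1:ℝ)) φ)) := by
    intro φ
    by_cases hφ : φ ∈ S
    · have hpos : 0 < Gfun β h x φ - s := sub_pos.2 hφ
      obtain ⟨N, hN⟩ := exists_nat_gt (1/(Gfun β h x φ - s))
      rw [Set.indicator_of_mem hφ]
      refine Tendsto.congr' ?_ tendsto_const_nhds
      filter_upwards [eventually_ge_atTop N] with n hn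
      have hεle : 1/((n:ℝ)+1) ≤ Gfun β h x φ - s := by
        rw [div_le_iff₀ (by positivity)]
        rw [div_lt_iff₀ hpos] at hN
        have : (N : ℝ) ≤ (n : ℝ) := by exact_mod_cast hn
        nlinarith
      have e1 : max (Gfun β h x φ - s) 0 = Gfun β h x φ - s := max_eq_left hpos.le
      have e2 : max (Gfun β h x φ - (s + 1/((n:ℝ)+1))) 0
          = Gfun β h x φ - s - 1/((n:ℝ)+1) := by
        rw [max_eq_left (by linarith)]; ring
      simp only [hFdef, e1, e2]
      field_simp
      ring
    · rw [Set.indicator_of_notMem hφ]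
      have hz : ∀ n, F n φ = 0 := by
        intro n
        have hGs : Gfun β h x φ ≤ s := not_lt.1 hφ
        have hεpos : (0:ℝ) < 1/((n:ℝ)+1) := by positivity
        have e1 : max (Gfun β h x φ - s) 0 = 0 := max_eq_right (by linarith)
        have e2 : max (Gfun β h x φ - (s + 1/((n:ℝ)+1))) 0 = 0 := max_eq_right (by linarith)
        simp only [hFdef, e1, e2]; ring
      simp only [hz]
      exact tendsto_const_nhds
  have hdctν := tendsto_integral_of_dominated_convergence (μ := ν) (F := F)
    (f := S.indicator fun _ => (1:ℝ)) (fun _ => (1:ℝ))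
    (fun n => (Fm n).aestronglyMeasurable) (integrable_const 1)
    (fun n => ae_of_all _ (hbound n)) (ae_of_all _ hlim)
  have hdctμ := tendsto_integral_of_dominated_convergence (μ := μ) (F := F)
    (f := S.indicator fun _ => (1:ℝ)) (fun _ => (1:ℝ))
    (fun n => (Fm n).aestronglyMeasurable) (integrable_const 1)
    (fun n => ae_of_all _ (hbound n)) (ae_of_all _ hlim)
  have hdctν' : Tendsto (fun n => ∫ φ, F n φ ∂μ) atTop
      (𝓝 (∫ φ, S.indicator (fun _ => (1:ℝ)) φ ∂ν)) := by
    refine hdctν.congr fun n => hFeq n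
  have huniq := tendsto_nhds_unique hdctν' hdctμ
  rw [show (S.indicator fun _ => (1:ℝ)) = S.indicator 1 from rfl] at huniq
  rw [integral_indicator_one hSm, integral_indicator_one hSm] at huniq
  exact (ENNReal.toReal_eq_toReal_iff' (measure_ne_top _ _) (measure_ne_top _ _)).1 huniq

end Level

end GibbsAux

namespace GibbsAux

/-- the event that the neighbourhood pattern of `x` equals `a`. -/
def Pat (x : V) (a : { y // y ∈ nbrs x } → ℕ) : Set Conf := restr x ⁻¹' {a}

lemma Pat_meas (x : V) (a : { y // y ∈ nbrs x } → ℕ) : MeasurableSet (Pat x a) :=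
  measurable_restr x (MeasurableSet.singleton a)

lemma Pat_disj (x : V) : Pairwise (Function.onFun Disjoint (Pat x)) := by
  intro a b hab
  rw [Function.onFun, Set.disjoint_left]
  intro φ ha hb
  exact hab ((Set.mem_singleton_iff.1 ha).symm.trans (Set.mem_singleton_iff.1 hb))

lemma Pat_cover (x : V) : (⋃ a, Pat x a) = Set.univ := by
  ext φ
  simp only [Set.mem_iUnion, Set.mem_univ, iff_true]
  exact ⟨restr x φ, rfl⟩

section Pattern

variable {β h : ℝ} (hβ : 0 < β) (x : V)
variable {ν μ : Measure Conf} [IsProbabilityMeasure ν] [IsProbabilityMeasure μ]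
variable (hdom : ∀ f : Conf → ℝ, Monotone f → Measurable f →
    (∃ Cb : ℝ, ∀ φ, |f φ| ≤ Cb) → ∫ φ, f φ ∂μ ≤ ∫ φ, f φ ∂ν)

include hβ hdom

lemma pattern_le (hG : ∫ φ, Gfun β h x φ ∂ν = ∫ φ, Gfun β h x φ ∂μ)
    (a : { y // y ∈ nbrs x } → ℕ) : ν (Pat x a) ≤ μ (Pat x a) := by
  have Gm : Measurable (Gfun β h x) := G_measurable β h x
  set s : ℝ := Gfun β h x (ext0 x a) with hsdef
  set A : Set Conf := {φ : Conf | s < Gfun β h x φ} with hAdef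
  set B : Set Conf := {φ : Conf | ∀ z : { y // y ∈ nbrs x }, φ z.val ≤ a z} with hBdef
  have hAm : MeasurableSet A := measurableSet_lt measurable_const Gm
  have hBm : MeasurableSet B := by
    have : B = ⋂ z : { y // y ∈ nbrs x }, {φ : Conf | φ z.val ≤ a z} := by
      ext φ; simp [hBdef]
    rw [this]
    refine MeasurableSet.iInter fun z => ?_
    have he : {φ : Conf | φ z.val ≤ a z} = (fun φ : Conf => φ z.val) ⁻¹' Set.Iic (a z) := rfl
    rw [he]
    exact measurable_pi_apply (X := fun _ : V => ℕ) z.val MeasurableSpace.measurableSet_top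
  have hLeq : A ∪ B = A ∪ Pat x a := by
    apply Set.Subset.antisymm
    · rintro φ (hφ | hφ)
      · exact Or.inl hφ
      · by_cases hlt : s < Gfun β h x φ
        · exact Or.inl hlt
        · right
          have hall : ∀ z : { y // y ∈ nbrs x }, restr x φ z = a z := by
            by_contra hne
            push_neg at hne
            obtain ⟨z, hz⟩ := hne
            have hzlt : φ z.val < a z := lt_of_le_of_ne (hφ z) hz
            have hcmp : ∀ y ∈ nbrs x, φ y ≤ ext0 x a y := fun y hy => by
              rw [restr_ext0 x a hy]; exact hφ ⟨y, hy⟩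
            have hstrict : φ z.val < ext0 x a z.val := by
              rw [restr_ext0 x a z.property]; exact hzlt
            exact hlt (G_lt hβ hcmp z.property hstrict)
          exact Set.mem_singleton_iff.2 (funext hall)
    · rintro φ (hφ | hφ)
      · exact Or.inl hφ
      · right
        intro z
        rw [show φ z.val = a z from congrFun (Set.mem_singleton_iff.1 hφ) z]
  have hdisj : Disjoint A (Pat x a) := by
    rw [Set.disjoint_left]
    intro φ hφ hPa
    have heq : Gfun β h x φ = s := by
      refine G_congr fun y hy => ?_
      rw [restr_ext0 x a hy]
      exact congrFun (Set.mem_singleton_iff.1 hPa) ⟨y, hy⟩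
    rw [hAdef] at hφ
    exact absurd hφ (by simp [heq])
  have hlower : ∀ ⦃φ ψ : Conf⦄, φ ≤ ψ → ψ ∈ A ∪ B → φ ∈ A ∪ B := by
    rintro φ ψ hle (hψ | hψ)
    · exact Or.inl (lt_of_lt_of_le hψ (G_le hβ fun y _ => hle y))
    · exact Or.inr fun z => le_trans (hle z.val) (hψ z)
  have hL : ν (A ∪ B) ≤ μ (A ∪ B) := meas_lower hdom hlower (hAm.union hBm)
  rw [hLeq, measure_union hdisj (Pat_meas x a), measure_union hdisj (Pat_meas x a),
    level_eq hβ x hdom hG s] at hL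
  exact (ENNReal.add_le_add_iff_left (measure_ne_top μ _)).1 hL

lemma pattern_eq (hG : ∫ φ, Gfun β h x φ ∂ν = ∫ φ, Gfun β h x φ ∂μ)
    (a : { y // y ∈ nbrs x } → ℕ) : ν (Pat x a) = μ (Pat x a) := by
  by_contra hne
  have hlt : ν (Pat x a) < μ (Pat x a) :=
    lt_of_le_of_ne (pattern_le hβ x hdom hG a) hne
  have hν : ∑' b, ν (Pat x b) = 1 := by
    rw [← measure_iUnion (Pat_disj x) (Pat_meas x), Pat_cover, measure_univ]
  have hμ : ∑' b, μ (Pat x b) = 1 := by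
    rw [← measure_iUnion (Pat_disj x) (Pat_meas x), Pat_cover, measure_univ]
  have := ENNReal.tsum_lt_tsum (i := a) (by rw [hν]; exact ENNReal.one_ne_top)
    (fun b => pattern_le hβ x hdom hG b) hlt
  rw [hν, hμ] at this
  exact lt_irrefl 1 this

lemma marg_eq (hG : ∫ φ, Gfun β h x φ ∂ν = ∫ φ, Gfun β h x φ ∂μ)
    (A : Set ({ y // y ∈ nbrs x } → ℕ)) :
    ν (restr x ⁻¹' A) = μ (restr x ⁻¹' A) := by
  have hun : restr x ⁻¹' A = ⋃ a : A, Pat x a.val := by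
    ext φ
    simp only [Set.mem_preimage, Set.mem_iUnion, Pat, Set.mem_singleton_iff]
    exact ⟨fun hh => ⟨⟨restr x φ, hh⟩, rfl⟩, by rintro ⟨a, ha⟩; rw [ha]; exact a.property⟩
  have hdisj : Pairwise (Function.onFun Disjoint fun a : A => Pat x a.val) := by
    intro a b hab
    exact Pat_disj x (fun hv => hab (Subtype.ext hv))
  rw [hun, measure_iUnion hdisj (fun a => Pat_meas x a.val),
    measure_iUnion hdisj (fun a => Pat_meas x a.val)]
  exact tsum_congr fun a => pattern_eq hβ x hdom hG a.val

end Pattern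

section Tail

variable {β h : ℝ} (hβ : 0 < β)
variable {ν μ : Measure Conf} [IsProbabilityMeasure ν] [IsProbabilityMeasure μ]
variable (hdom : ∀ f : Conf → ℝ, Monotone f → Measurable f →
    (∃ Cb : ℝ, ∀ φ, |f φ| ≤ Cb) → ∫ φ, f φ ∂μ ≤ ∫ φ, f φ ∂ν)

include hβ hdom

lemma tail_eq (hG : ∀ x : V, ∫ φ, Gfun β h x φ ∂ν = ∫ φ, Gfun β h x φ ∂μ)
    (y : V) (k : ℕ) :
    ν {φ : Conf | k ≤ φ y} = μ {φ : Conf | k ≤ φ y} := by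
  set x : V := (y.1 - 1, y.2) with hxdef
  have hy : y ∈ nbrs x := by
    have : (x.1 + 1, x.2) = y := by
      rw [hxdef]; exact Prod.ext (by ring) rfl
    rw [nbrs, ← this]
    exact Finset.mem_insert_self _ _
  have hset : {φ : Conf | k ≤ φ y} = restr x ⁻¹' {a | k ≤ a ⟨y, hy⟩} := rfl
  rw [hset]
  exact marg_eq hβ x hdom (hG x) _

end Tail

end GibbsAux

namespace GibbsAux

/-- the π-system of finite "tail" cylinders. -/
def Cyl : Set (Set Conf) :=
  {S | ∃ (F : Finset V) (c : V → ℕ), S = {φ : Conf | ∀ y ∈ F, c y ≤ φ y}}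

lemma tail_upper (y : V) (k : ℕ) : IsUpper {φ : Conf | k ≤ φ y} :=
  fun φ ψ hle hφ => le_trans hφ (hle y)

lemma tail_meas (y : V) (k : ℕ) : MeasurableSet {φ : Conf | k ≤ φ y} := by
  have he : {φ : Conf | k ≤ φ y} = (fun φ : Conf => φ y) ⁻¹' Set.Ici k := rfl
  rw [he]
  exact measurable_pi_apply (X := fun _ : V => ℕ) y MeasurableSpace.measurableSet_top

lemma cylSet_upper (F : Finset V) (c : V → ℕ) :
    IsUpper {φ : Conf | ∀ y ∈ F, c y ≤ φ y} :=
  fun φ ψ hle hφ y hy => le_trans (hφ y hy) (hle y)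

lemma cylSet_meas (F : Finset V) (c : V → ℕ) :
    MeasurableSet {φ : Conf | ∀ y ∈ F, c y ≤ φ y} := by
  have he : {φ : Conf | ∀ y ∈ F, c y ≤ φ y} = ⋂ y ∈ F, {φ : Conf | c y ≤ φ y} := by
    ext φ; simp
  rw [he]
  exact MeasurableSet.biInter F.countable_toSet fun y _ => tail_meas y (c y)

lemma Cyl_pi : IsPiSystem Cyl := by
  rintro S1 ⟨F1, c1, rfl⟩ S2 ⟨F2, c2, rfl⟩ -
  refine ⟨F1 ∪ F2, fun y => max (if y ∈ F1 then c1 y else 0) (if y ∈ F2 then c2 y else 0), ?_⟩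
  ext φ
  simp only [Set.mem_inter_iff, Set.mem_setOf_eq, Finset.mem_union]
  constructor
  · rintro ⟨hA, hB⟩ y hy
    apply max_le
    · split_ifs with hh
      · exact hA y hh
      · exact Nat.zero_le _
    · split_ifs with hh
      · exact hB y hh
      · exact Nat.zero_le _
  · intro hh
    constructor
    · intro y hy
      have h1 : c1 y ≤ max (if y ∈ F1 then c1 y else 0) (if y ∈ F2 then c2 y else 0) := by
        rw [if_pos hy]; exact le_max_left _ _
      exact le_trans h1 (hh y (Or.inl hy))
    · intro y hy
      have h1 : c2 y ≤ max (if y ∈ F1 then c1 y else 0) (if y ∈ F2 then c2 y else 0) := by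
        rw [if_pos hy]; exact le_max_right _ _
      exact le_trans h1 (hh y (Or.inr hy))

lemma Cyl_gen : (inferInstance : MeasurableSpace Conf) = MeasurableSpace.generateFrom Cyl := by
  apply le_antisymm
  · show MeasurableSpace.pi ≤ MeasurableSpace.generateFrom Cyl
    refine iSup_le fun y => ?_
    intro s hs
    obtain ⟨t, -, rfl⟩ := MeasurableSpace.measurableSet_comap.1 hs
    have h1 : ∀ n : ℕ, MeasurableSet[MeasurableSpace.generateFrom Cyl]
        {φ : Conf | n ≤ φ y} := fun n =>
      MeasurableSpace.measurableSet_generateFrom ⟨{y}, fun _ => n, by ext φ; simp⟩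
    have hsing : ∀ n : ℕ, MeasurableSet[MeasurableSpace.generateFrom Cyl]
        {φ : Conf | φ y = n} := by
      intro n
      have he : {φ : Conf | φ y = n} = {φ : Conf | n ≤ φ y} \ {φ : Conf | n + 1 ≤ φ y} := by
        ext φ; simp only [Set.mem_setOf_eq, Set.mem_diff]; omega
      rw [he]
      exact (h1 n).diff (h1 (n + 1))
    have he : (fun φ : Conf => φ y) ⁻¹' t = ⋃ n ∈ t, {φ : Conf | φ y = n} := by
      ext φ; simp
    exact he ▸ MeasurableSet.biUnion t.to_countable fun n _ => hsing n
  · rw [MeasurableSpace.generateFrom_le_iff]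
    rintro S ⟨F, c, rfl⟩
    exact cylSet_meas F c

section CylEq

variable {β h : ℝ} (hβ : 0 < β)
variable {ν μ : Measure Conf} [IsProbabilityMeasure ν] [IsProbabilityMeasure μ]
variable (hdom : ∀ f : Conf → ℝ, Monotone f → Measurable f →
    (∃ Cb : ℝ, ∀ φ, |f φ| ≤ Cb) → ∫ φ, f φ ∂μ ≤ ∫ φ, f φ ∂ν)

include hβ hdom

lemma cyl_eq (hG : ∀ x : V, ∫ φ, Gfun β h x φ ∂ν = ∫ φ, Gfun β h x φ ∂μ)
    (S : Set Conf) (hS : S ∈ Cyl) : ν S = μ S := by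
  obtain ⟨F, c, rfl⟩ := hS
  induction F using Finset.induction_on with
  | empty =>
      simp only [Finset.notMem_empty, false_implies, implies_true, Set.setOf_true]
      rw [measure_univ, measure_univ]
  | @insert y F hyF ih =>
      have hsplit : {φ : Conf | ∀ z ∈ insert y F, c z ≤ φ z} =
          {φ : Conf | c y ≤ φ y} ∩ {φ : Conf | ∀ z ∈ F, c z ≤ φ z} := by
        ext φ
        simp [Finset.forall_mem_insert]
      rw [hsplit]
      exact inter_eq hdom (tail_upper y (c y)) (cylSet_upper F c)
        (tail_meas y (c y)) (cylSet_meas F c)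
        (tail_eq hβ hdom hG y (c y)) ih

end CylEq

end GibbsAux

/-- Uniqueness of the Gibbs state: if `ν` is a translation-invariant finite-mean measure
which stochastically dominates `μ = P̃`, both satisfy the single-site DLR identity
`P(φ(x)=0) = E[G_x]` with the strictly decreasing kernel `G`, and they have the same contact
fraction `ν(φ(x)=0) = μ(φ(x)=0)` at every site, then `ν = μ`. -/
theorem gibbs_state_uniqueness (β h : ℝ) (hβ : 0 < β)
    (ν μ : Measure Conf) [IsProbabilityMeasure ν] [IsProbabilityMeasure μ]
    (hνinv : ∀ t : V, ν.map (shift t) = ν)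
    (hμinv : ∀ t : V, μ.map (shift t) = μ)
    (hmean : ∀ x : V, Integrable (fun φ : Conf => (φ x : ℝ)) ν)
    (hdom : ∀ f : Conf → ℝ, Monotone f → Measurable f → (∃ Cb : ℝ, ∀ φ, |f φ| ≤ Cb) →
      ∫ φ, f φ ∂μ ≤ ∫ φ, f φ ∂ν)
    (hDLRν : ∀ x : V, (ν {φ : Conf | φ x = 0}).toReal = ∫ φ, Gfun β h x φ ∂ν)
    (hDLRμ : ∀ x : V, (μ {φ : Conf | φ x = 0}).toReal = ∫ φ, Gfun β h x φ ∂μ)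
    (hcontact : ∀ x : V, ν {φ : Conf | φ x = 0} = μ {φ : Conf | φ x = 0}) :
    ν = μ := by
  have hG : ∀ x : V, ∫ φ, Gfun β h x φ ∂ν = ∫ φ, Gfun β h x φ ∂μ := fun x => by
    rw [← hDLRν x, ← hDLRμ x, hcontact x]
  refine MeasureTheory.ext_of_generate_finite GibbsAux.Cyl GibbsAux.Cyl_gen GibbsAux.Cyl_pi
    (fun S hS => GibbsAux.cyl_eq hβ hdom hG S hS) ?_
  rw [measure_univ, measure_univ]
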